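/- arXiv:0911.4727 — 3 statements merged into one kernel-verified Lean document; each statement's English description precedes it below -/
import Mathlib

section
/- Let D ⊆ K be coherent relative to (K,C). Then D is maximal among sets coherent relative to (K,C) — i.e., every set D' coherent relative to (K,C) with D ⊆ D' satisfies D = D' — if and only if for every nonzero f ∈ K, f ∉ D implies −f ∈ D. -/
variable {Ω : Type*}

/-- A bounded real-valued function on `Ω` (a gamble). -/
def Bdd (f : Ω → ℝ) : Prop := ∃ M : ℝ, ∀ ω, |f ω| ≤ M

/-- The positive hull of a set of gambles: all finite strictly positive linear combinations. -/
def posi (A : Set (Ω → ℝ)) : Set (Ω → ℝ) :=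
  {g | ∃ n : ℕ, 0 < n ∧ ∃ (c : Fin n → ℝ) (f : Fin n → Ω → ℝ),
    (∀ k, 0 < c k) ∧ (∀ k, f k ∈ A) ∧ g = ∑ k, c k • f k}

/-- `K` is a linear subspace of the space of gambles. -/
def IsLinSubspace (K : Set (Ω → ℝ)) : Prop :=
  (0 : Ω → ℝ) ∈ K ∧ (∀ f ∈ K, ∀ g ∈ K, f + g ∈ K) ∧ ∀ f ∈ K, ∀ c : ℝ, c • f ∈ K

/-- `D ⊆ K` is coherent relative to `(K, C)`:  `0 ∉ D`; every `f ∈ K` with `f ≻ 0`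
(i.e. `f ∈ C` and `f ≠ 0`) belongs to `D`; and `D` is closed under positive scaling
and addition. -/
def CoherentRel (K C D : Set (Ω → ℝ)) : Prop :=
  D ⊆ K ∧ (0 : Ω → ℝ) ∉ D ∧ (∀ f ∈ K, f ∈ C → f ≠ 0 → f ∈ D) ∧
  (∀ f ∈ D, ∀ c : ℝ, 0 < c → c • f ∈ D) ∧ ∀ f ∈ D, ∀ g ∈ D, f + g ∈ D

/-- `D` avoids non-positivity relative to `(K, C)`: no `f ∈ posi D` satisfies `f ⪯ 0`
(i.e. `-f ∈ C`). -/
def AvoidsNonpos (C D : Set (Ω → ℝ)) : Prop := ∀ f ∈ posi D, ¬ -f ∈ C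

/-! If neither `f` nor `-f` lies in `D`, then `D ∪ {l • f + g | l > 0, g ∈ D ∪ {0}}` is a coherent
set strictly larger than `D`: it could only contain `0` if `-f = l⁻¹ • g ∈ D`. Conversely, if `D`
contains `f` or `-f` for every nonzero `f ∈ K`, any coherent `D' ⊇ D` holding some `f ∉ D` would
also hold `-f`, hence `0 = f + -f`. -/

section AdjoinRay

variable {D : Set (Ω → ℝ)} {f g : Ω → ℝ}

theorem add_mem_insert_zero (hadd : ∀ f ∈ D, ∀ g ∈ D, f + g ∈ D)
    (hf : f ∈ insert 0 D) (hg : g ∈ insert 0 D) : f + g ∈ insert 0 D := by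
  rcases hf with rfl | hf
  · simpa using hg
  rcases hg with rfl | hg
  · simpa using Or.inr hf
  · exact Or.inr (hadd f hf g hg)

theorem smul_mem_insert_zero (hsmul : ∀ f ∈ D, ∀ c : ℝ, 0 < c → c • f ∈ D)
    {c : ℝ} (hc : 0 < c) (hf : f ∈ insert 0 D) : c • f ∈ insert 0 D := by
  rcases hf with rfl | hf
  · simp
  · exact Or.inr (hsmul f hf c hc)

def adjoinRay (D : Set (Ω → ℝ)) (f : Ω → ℝ) : Set (Ω → ℝ) :=
  D ∪ {h | ∃ l : ℝ, 0 < l ∧ ∃ g ∈ insert 0 D, h = l • f + g}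

theorem subset_adjoinRay : D ⊆ adjoinRay D f := Set.subset_union_left

theorem mem_adjoinRay_self : f ∈ adjoinRay D f :=
  Or.inr ⟨1, one_pos, 0, Set.mem_insert 0 D, by simp⟩

theorem adjoinRay_subset {K : Set (Ω → ℝ)} (hK : IsLinSubspace K) (hDK : D ⊆ K) (hfK : f ∈ K) :
    adjoinRay D f ⊆ K := by
  obtain ⟨hK0, hKadd, hKsmul⟩ := hK
  rintro _ (hh | ⟨l, -, g, hg, rfl⟩)
  · exact hDK hh
  · refine hKadd _ (hKsmul f hfK l) g ?_
    rcases hg with rfl | hg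
    exacts [hK0, hDK hg]

theorem zero_notMem_adjoinRay (hsmul : ∀ f ∈ D, ∀ c : ℝ, 0 < c → c • f ∈ D)
    (hD0 : (0 : Ω → ℝ) ∉ D) (hf0 : f ≠ 0) (hnf : -f ∉ D) : (0 : Ω → ℝ) ∉ adjoinRay D f := by
  rintro (h0 | ⟨l, hl, g, hg, h0⟩)
  · exact hD0 h0
  have hg_eq : g = -(l • f) := eq_neg_of_add_eq_zero_right h0.symm
  rcases hg with rfl | hg
  · exact hf0 ((smul_eq_zero.mp (neg_eq_zero.mp hg_eq.symm)).resolve_left hl.ne')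
  · apply hnf
    convert hsmul g hg l⁻¹ (inv_pos.mpr hl) using 1
    rw [hg_eq, smul_neg, smul_smul, inv_mul_cancel₀ hl.ne', one_smul]

theorem smul_mem_adjoinRay (hsmul : ∀ f ∈ D, ∀ c : ℝ, 0 < c → c • f ∈ D)
    {h : Ω → ℝ} (hh : h ∈ adjoinRay D f) {c : ℝ} (hc : 0 < c) : c • h ∈ adjoinRay D f := by
  rcases hh with hh | ⟨l, hl, g, hg, rfl⟩
  · exact subset_adjoinRay (hsmul h hh c hc)
  · exact Or.inr ⟨c * l, mul_pos hc hl, c • g, smul_mem_insert_zero hsmul hc hg,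
      by rw [smul_add, smul_smul]⟩

theorem add_mem_adjoinRay (hadd : ∀ f ∈ D, ∀ g ∈ D, f + g ∈ D)
    {h₁ h₂ : Ω → ℝ} (hh₁ : h₁ ∈ adjoinRay D f) (hh₂ : h₂ ∈ adjoinRay D f) :
    h₁ + h₂ ∈ adjoinRay D f := by
  rcases hh₁ with hh₁ | ⟨l, hl, g, hg, rfl⟩ <;> rcases hh₂ with hh₂ | ⟨m, hm, g', hg', rfl⟩
  · exact subset_adjoinRay (hadd _ hh₁ _ hh₂)
  · exact Or.inr ⟨m, hm, h₁ + g', add_mem_insert_zero hadd (Or.inr hh₁) hg', by abel⟩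
  · exact Or.inr ⟨l, hl, g + h₂, add_mem_insert_zero hadd hg (Or.inr hh₂), by abel⟩
  · exact Or.inr ⟨l + m, add_pos hl hm, g + g', add_mem_insert_zero hadd hg hg',
      by rw [add_smul]; abel⟩

theorem CoherentRel.adjoinRay {K C : Set (Ω → ℝ)} (hK : IsLinSubspace K)
    (hD : CoherentRel K C D) (hfK : f ∈ K) (hf0 : f ≠ 0) (hnf : -f ∉ D) :
    CoherentRel K C (adjoinRay D f) := by
  obtain ⟨hDK, hD0, hDC, hsmul, hadd⟩ := hD
  exact ⟨adjoinRay_subset hK hDK hfK, zero_notMem_adjoinRay hsmul hD0 hf0 hnf,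
    fun h hhK hhC hh0 => subset_adjoinRay (hDC h hhK hhC hh0),
    fun _ hh _ hc => smul_mem_adjoinRay hsmul hh hc,
    fun _ hh₁ _ hh₂ => add_mem_adjoinRay hadd hh₁ hh₂⟩

end AdjoinRay

theorem CoherentRel.eq_of_subset_of_neg_mem {K C D D' : Set (Ω → ℝ)} (hD' : CoherentRel K C D')
    (hsub : D ⊆ D') (hcomp : ∀ f ∈ K, f ≠ 0 → f ∉ D → -f ∈ D) : D = D' := by
  obtain ⟨hD'K, hD'0, -, -, hD'add⟩ := hD'
  refine hsub.antisymm fun f hf => by_contra fun hfD => hD'0 ?_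
  have hf0 : f ≠ 0 := fun h => hD'0 (h ▸ hf)
  simpa using hD'add f hf (-f) (hsub (hcomp f (hD'K hf) hf0 hfD))

theorem maximality_characterisation_general (K C D : Set (Ω → ℝ))
    (hK : IsLinSubspace K) (hD : CoherentRel K C D) :
    (∀ D' : Set (Ω → ℝ), CoherentRel K C D' → D ⊆ D' → D = D') ↔
      ∀ f ∈ K, f ≠ 0 → f ∉ D → -f ∈ D := by
  refine ⟨fun hmax f hfK hf0 hfD => by_contra fun hnf => hfD ?_,
    fun hcomp D' hD' hsub => hD'.eq_of_subset_of_neg_mem hsub hcomp⟩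
  rw [hmax _ (hD.adjoinRay hK hfK hf0 hnf) subset_adjoinRay]
  exact mem_adjoinRay_self

theorem maximality_characterisation [Nonempty Ω] (K C D : Set (Ω → ℝ))
    (hKG : ∀ f ∈ K, Bdd f) (hK : IsLinSubspace K)
    (hCK : C ⊆ K) (hCne : C ≠ K) (hCcone : posi C = C) (hC0 : (0 : Ω → ℝ) ∈ C)
    (hD : CoherentRel K C D) :
    (∀ D' : Set (Ω → ℝ), CoherentRel K C D' → D ⊆ D' → D = D') ↔
      ∀ f ∈ K, f ≠ 0 → f ∉ D → -f ∈ D :=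
  maximality_characterisation_general K C D hK hD
end

section
/- For any A ⊆ K, the (K,C)-natural extension E_{(K,C)}(A) — the intersection of all sets coherent relative to (K,C) that include A — equals the intersection of all maximal sets coherent relative to (K,C) that include A (both intersections taken to be K when empty). -/
/-!
Every coherent set lies in a maximal one (Zorn), so it suffices to show that a gamble `f ∈ K`
outside a coherent `D ⊇ A` also misses some maximal coherent `M ⊇ D`. For `f = 0` any maximal
extension works. Otherwise `D` together with all `d - c • f` (`c > 0`, `d ∈ D ∪ {0}`) is still
coherent, since `d - c • f = 0` would put `f = c⁻¹ • d` in `D`; a maximal extension of that set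
contains `-f`, hence cannot contain `f` without containing `0`.
-/

variable {Ω : Type*}

/-- The `(K, C)`-natural extension of `A`: the intersection of all sets coherent relative
to `(K, C)` that include `A` (taken within `K`, so it equals `K` when there are none). -/
def natexRel (K C A : Set (Ω → ℝ)) : Set (Ω → ℝ) :=
  {f | f ∈ K ∧ ∀ D : Set (Ω → ℝ), CoherentRel K C D → A ⊆ D → f ∈ D}

theorem IsLinSubspace.sub_smul_mem {K : Set (Ω → ℝ)} (hK : IsLinSubspace K) {d f : Ω → ℝ}
    (hd : d ∈ K) (hf : f ∈ K) (c : ℝ) : d - c • f ∈ K := by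
  simpa [sub_eq_add_neg, smul_smul] using hK.2.1 d hd _ (hK.2.2 f hf (-c))

def extendByNeg (D : Set (Ω → ℝ)) (f : Ω → ℝ) : Set (Ω → ℝ) :=
  D ∪ {g | ∃ c : ℝ, 0 < c ∧ ∃ d ∈ insert 0 D, g = d - c • f}

theorem subset_extendByNeg (D : Set (Ω → ℝ)) (f : Ω → ℝ) : D ⊆ extendByNeg D f :=
  Set.subset_union_left

theorem neg_mem_extendByNeg (D : Set (Ω → ℝ)) (f : Ω → ℝ) : -f ∈ extendByNeg D f :=
  Or.inr ⟨1, one_pos, 0, Set.mem_insert _ _, by simp⟩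

namespace CoherentRel

variable {K C D : Set (Ω → ℝ)}

theorem sUnion_of_isChain {c : Set (Set (Ω → ℝ))} (hc : ∀ D ∈ c, CoherentRel K C D)
    (hchain : IsChain (· ⊆ ·) c) (hne : c.Nonempty) : CoherentRel K C (⋃₀ c) := by
  refine ⟨?_, ?_, ?_, ?_, ?_⟩
  · rintro g ⟨D, hD, hg⟩
    exact (hc D hD).1 hg
  · rintro ⟨D, hD, h0⟩
    exact (hc D hD).2.1 h0
  · intro g hgK hgC hg0
    obtain ⟨D, hD⟩ := hne
    exact ⟨D, hD, (hc D hD).2.2.1 g hgK hgC hg0⟩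
  · rintro g ⟨D, hD, hg⟩ e he
    exact ⟨D, hD, (hc D hD).2.2.2.1 g hg e he⟩
  · rintro g ⟨D, hD, hg⟩ h ⟨E, hE, hh⟩
    rcases hchain.total hD hE with hDE | hED
    · exact ⟨E, hE, (hc E hE).2.2.2.2 g (hDE hg) h hh⟩
    · exact ⟨D, hD, (hc D hD).2.2.2.2 g hg h (hED hh)⟩

theorem exists_maximal (hD : CoherentRel K C D) :
    ∃ M, D ⊆ M ∧ Maximal (CoherentRel K C) M :=
  zorn_subset_nonempty {E | CoherentRel K C E}
    (fun c hc hchain hne => ⟨⋃₀ c, sUnion_of_isChain hc hchain hne,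
      fun _ => Set.subset_sUnion_of_mem⟩) D hD

theorem add_mem_insert_zero (hD : CoherentRel K C D) {f g : Ω → ℝ}
    (hf : f ∈ insert 0 D) (hg : g ∈ insert 0 D) : f + g ∈ insert 0 D := by
  rcases hf with rfl | hf
  · simpa using hg
  rcases hg with rfl | hg
  · simpa using Or.inr hf
  · exact Or.inr (hD.2.2.2.2 f hf g hg)

theorem smul_mem_insert_zero (hD : CoherentRel K C D) {f : Ω → ℝ} (hf : f ∈ insert 0 D)
    {c : ℝ} (hc : 0 < c) : c • f ∈ insert 0 D := by
  rcases hf with rfl | hf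
  · simp
  · exact Or.inr (hD.2.2.2.1 f hf c hc)

theorem extendByNeg (hK : IsLinSubspace K) (hD : CoherentRel K C D) {f : Ω → ℝ}
    (hfK : f ∈ K) (hf0 : f ≠ 0) (hfD : f ∉ D) : CoherentRel K C (extendByNeg D f) := by
  obtain ⟨hDK, hD0, hDC, hDs, hDa⟩ := id hD
  have hD₀K : insert 0 D ⊆ K := Set.insert_subset hK.1 hDK
  have sub_smul_mem {c : ℝ} (hc : 0 < c) {d : Ω → ℝ} (hd : d ∈ insert 0 D) :
      d - c • f ∈ _root_.extendByNeg D f := Or.inr ⟨c, hc, d, hd, rfl⟩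
  refine ⟨?_, ?_, fun g hgK hgC hg0 => Or.inl (hDC g hgK hgC hg0), ?_, ?_⟩
  · rintro g (hg | ⟨c, -, d, hd, rfl⟩)
    exacts [hDK hg, hK.sub_smul_mem (hD₀K hd) hfK c]
  · rintro (h0 | ⟨c, hc, d, hd, h0⟩)
    · exact hD0 h0
    have hdf : d = c • f := sub_eq_zero.mp h0.symm
    rcases hd with rfl | hd
    · exact hf0 ((smul_eq_zero.mp hdf.symm).resolve_left hc.ne')
    · refine hfD ?_
      simpa [hdf, smul_smul, hc.ne'] using hDs _ hd c⁻¹ (inv_pos.mpr hc)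
  · rintro g (hg | ⟨c, hc, d, hd, rfl⟩) e he
    · exact Or.inl (hDs g hg e he)
    · simpa [smul_sub, smul_smul] using
        sub_smul_mem (mul_pos he hc) (hD.smul_mem_insert_zero hd he)
  · rintro g (hg | ⟨c, hc, d, hd, rfl⟩) g' (hg' | ⟨c', hc', d', hd', rfl⟩)
    · exact Or.inl (hDa g hg g' hg')
    · convert sub_smul_mem hc' (hD.add_mem_insert_zero (Or.inr hg) hd') using 1; abel
    · convert sub_smul_mem hc (hD.add_mem_insert_zero hd (Or.inr hg')) using 1; abel
    · convert sub_smul_mem (add_pos hc hc') (hD.add_mem_insert_zero hd hd') using 1; module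

theorem exists_maximal_not_mem (hK : IsLinSubspace K) (hD : CoherentRel K C D) {f : Ω → ℝ}
    (hfK : f ∈ K) (hfD : f ∉ D) : ∃ M, D ⊆ M ∧ Maximal (CoherentRel K C) M ∧ f ∉ M := by
  rcases eq_or_ne f 0 with rfl | hf0
  · obtain ⟨M, hDM, hM⟩ := hD.exists_maximal
    exact ⟨M, hDM, hM, hM.prop.2.1⟩
  · obtain ⟨M, hDM, hM⟩ := (hD.extendByNeg hK hfK hf0 hfD).exists_maximal
    refine ⟨M, (subset_extendByNeg D f).trans hDM, hM, fun hfM => hM.prop.2.1 ?_⟩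
    simpa using hM.prop.2.2.2.2 f hfM (-f) (hDM (neg_mem_extendByNeg D f))

end CoherentRel

theorem natex_eq_inter_maximal_general (K C A : Set (Ω → ℝ))
    (hK : IsLinSubspace K) :
    natexRel K C A =
      {f | f ∈ K ∧ ∀ D : Set (Ω → ℝ), CoherentRel K C D →
        (∀ D' : Set (Ω → ℝ), CoherentRel K C D' → D ⊆ D' → D = D') →
        A ⊆ D → f ∈ D} := by
  ext f
  refine ⟨fun ⟨hfK, h⟩ => ⟨hfK, fun D hD _ hAD => h D hD hAD⟩, fun ⟨hfK, h⟩ => ⟨hfK, ?_⟩⟩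
  intro D hD hAD
  by_contra hfD
  obtain ⟨M, hDM, hM, hfM⟩ := hD.exists_maximal_not_mem hK hfK hfD
  exact hfM (h M hM.prop (fun _ => hM.eq_of_subset) (hAD.trans hDM))

theorem natex_eq_inter_maximal [Nonempty Ω] (K C A : Set (Ω → ℝ))
    (hKG : ∀ f ∈ K, Bdd f) (hK : IsLinSubspace K)
    (hCK : C ⊆ K) (hCne : C ≠ K) (hCcone : posi C = C) (hC0 : (0 : Ω → ℝ) ∈ C)
    (hA : A ⊆ K) :
    natexRel K C A =
      {f | f ∈ K ∧ ∀ D : Set (Ω → ℝ), CoherentRel K C D →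
        (∀ D' : Set (Ω → ℝ), CoherentRel K C D' → D ⊆ D' → D = D') →
        A ⊆ D → f ∈ D} :=
  natex_eq_inter_maximal_general K C A hK
end

section
/- Let D be a coherent set of gambles on Ω, and let W(D) := {f ∈ G(Ω) : f + f' ∈ D for all f' ∈ D} be the associated set of weakly desirable gambles. Then for all gambles f, f₁, f₂ and all real λ ≥ 0: (WD1) if f < 0 then f ∉ W(D); (WD2) if f ≥ 0 then f ∈ W(D); (WD3) if f ∈ W(D) then λf ∈ W(D); (WD4) if f₁, f₂ ∈ W(D) then f₁ + f₂ ∈ W(D). -/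
variable {Ω : Type*}

/-- A coherent set of desirable gambles on `Ω`:  its elements are gambles (bounded);
`0 ∉ D`; every gamble `f > 0` (pointwise `≥ 0` and nonzero) belongs to `D`; and `D` is
closed under positive scaling and addition. -/
def Coherent (D : Set (Ω → ℝ)) : Prop :=
  (∀ f ∈ D, Bdd f) ∧ (0 : Ω → ℝ) ∉ D ∧
  (∀ f : Ω → ℝ, Bdd f → 0 ≤ f → f ≠ 0 → f ∈ D) ∧
  (∀ f ∈ D, ∀ c : ℝ, 0 < c → c • f ∈ D) ∧ ∀ f ∈ D, ∀ g ∈ D, f + g ∈ D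

/-- The set of weakly desirable gambles associated with `D`. -/
def weakly (D : Set (Ω → ℝ)) : Set (Ω → ℝ) := {f | Bdd f ∧ ∀ g ∈ D, f + g ∈ D}

namespace Bdd

theorem zero : Bdd (0 : Ω → ℝ) := ⟨0, fun _ => by simp⟩

theorem neg {f : Ω → ℝ} (hf : Bdd f) : Bdd (-f) := by
  obtain ⟨M, hM⟩ := hf
  exact ⟨M, fun ω => by simpa using hM ω⟩

theorem add {f g : Ω → ℝ} (hf : Bdd f) (hg : Bdd g) : Bdd (f + g) := by
  obtain ⟨M, hM⟩ := hf
  obtain ⟨N, hN⟩ := hg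
  exact ⟨M + N, fun ω => (abs_add_le _ _).trans (add_le_add (hM ω) (hN ω))⟩

theorem const_smul {f : Ω → ℝ} (hf : Bdd f) (c : ℝ) : Bdd (c • f) := by
  obtain ⟨M, hM⟩ := hf
  refine ⟨|c| * M, fun ω => ?_⟩
  rw [Pi.smul_apply, smul_eq_mul, abs_mul]
  exact mul_le_mul_of_nonneg_left (hM ω) (abs_nonneg c)

end Bdd

section Weakly

variable {D : Set (Ω → ℝ)}

theorem zero_mem_weakly : (0 : Ω → ℝ) ∈ weakly D :=
  ⟨Bdd.zero, fun g hg => by rwa [zero_add]⟩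

theorem add_mem_weakly {f g : Ω → ℝ} (hf : f ∈ weakly D) (hg : g ∈ weakly D) :
    f + g ∈ weakly D :=
  ⟨hf.1.add hg.1, fun h hh => by simpa only [add_assoc] using hf.2 (g + h) (hg.2 h hh)⟩

theorem mem_weakly_of_nonneg (hD : Coherent D) {f : Ω → ℝ} (hb : Bdd f) (hf : 0 ≤ f) :
    f ∈ weakly D := by
  rcases eq_or_ne f 0 with rfl | hne
  · exact zero_mem_weakly
  · exact ⟨hb, hD.2.2.2.2 f (hD.2.2.1 f hb hf hne)⟩

theorem notMem_weakly_of_nonpos (hD : Coherent D) {f : Ω → ℝ} (hb : Bdd f) (hf : f ≤ 0)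
    (hne : f ≠ 0) : f ∉ weakly D := by
  intro hw
  have hneg : -f ∈ D := hD.2.2.1 (-f) hb.neg (neg_nonneg.mpr hf) (neg_ne_zero.mpr hne)
  have hzero : f + -f ∈ D := hw.2 (-f) hneg
  exact hD.2.1 (by rwa [add_neg_cancel] at hzero)

-- `c • f + g = c • (f + c⁻¹ • g)`, and `c⁻¹ • g ∈ D` because `D` is a cone.
theorem smul_mem_weakly (hD : Coherent D) {f : Ω → ℝ} (hf : f ∈ weakly D) {c : ℝ}
    (hc : 0 ≤ c) : c • f ∈ weakly D := by
  rcases hc.eq_or_lt with rfl | hc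
  · rw [zero_smul]
    exact zero_mem_weakly
  refine ⟨hf.1.const_smul c, fun g hg => ?_⟩
  have hsum : f + c⁻¹ • g ∈ D := hf.2 _ (hD.2.2.2.1 g hg c⁻¹ (inv_pos.mpr hc))
  have hscaled := hD.2.2.2.1 _ hsum c hc
  rwa [smul_add, smul_smul, mul_inv_cancel₀ hc.ne', one_smul] at hscaled

end Weakly

theorem weak_desirability_properties_general (D : Set (Ω → ℝ)) (hD : Coherent D) :
    (∀ f : Ω → ℝ, Bdd f → f ≤ 0 → f ≠ 0 → f ∉ weakly D) ∧
    (∀ f : Ω → ℝ, Bdd f → 0 ≤ f → f ∈ weakly D) ∧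
    (∀ f ∈ weakly D, ∀ c : ℝ, 0 ≤ c → c • f ∈ weakly D) ∧
    ∀ f ∈ weakly D, ∀ g ∈ weakly D, f + g ∈ weakly D :=
  ⟨fun _ hb hf hne => notMem_weakly_of_nonpos hD hb hf hne,
    fun _ hb hf => mem_weakly_of_nonneg hD hb hf,
    fun _ hf _ hc => smul_mem_weakly hD hf hc,
    fun _ hf _ hg => add_mem_weakly hf hg⟩

theorem weak_desirability_properties [Nonempty Ω] (D : Set (Ω → ℝ)) (hD : Coherent D) :
    (∀ f : Ω → ℝ, Bdd f → f ≤ 0 → f ≠ 0 → f ∉ weakly D) ∧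
    (∀ f : Ω → ℝ, Bdd f → 0 ≤ f → f ∈ weakly D) ∧
    (∀ f ∈ weakly D, ∀ c : ℝ, 0 ≤ c → c • f ∈ weakly D) ∧
    ∀ f ∈ weakly D, ∀ g ∈ weakly D, f + g ∈ weakly D :=
  weak_desirability_properties_general D hD
end
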